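/- arXiv:2112.09218 — 8 statements merged into one kernel-verified Lean document; each statement's English description precedes it below -/
import Mathlib

section
/- Every refinement monoid is atom-cancellative: if M is a commutative refinement monoid, a ∈ M is an atom, and a + m = a + m' for m, m' ∈ M, then m = m'. -/
/-! Refining `a + m = a + m'` gives `a = e₁ + e₂`, `m = e₃ + e₄`, `a = e₁ + e₃`, `m' = e₂ + e₄`.
Since `a` is an atom, either `e₁ = 0` and `e₂ = e₃ = a`, or `e₂ = e₃ = 0`; in both cases `m = m'`. -/

theorem eq_of_eq_add_of_eq_add_of_atom {M : Type*} [AddCommMonoid M] {a e f g : M}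
    (hatom : ∀ b c : M, a = b + c → b = 0 ∨ c = 0) (hf : a = e + f) (hg : a = e + g) :
    f = g := by
  rcases hatom e f hf with rfl | rfl
  · rw [zero_add] at hf hg
    rw [← hf, ← hg]
  · rcases hatom e g hg with rfl | rfl
    · rw [add_zero] at hf
      rw [hf, zero_add] at hg
      exact hg
    · rfl

theorem refinement_atom_cancellative_general {M : Type*} [AddCommMonoid M]
    (hrefine : ∀ a b c d : M, a + b = c + d →
      ∃ e1 e2 e3 e4 : M, a = e1 + e2 ∧ b = e3 + e4 ∧ c = e1 + e3 ∧ d = e2 + e4)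
    (a : M) (hatom : ∀ b c : M, a = b + c → b = 0 ∨ c = 0)
    (m m' : M) (h : a + m = a + m') : m = m' := by
  obtain ⟨e1, e2, e3, e4, ha, rfl, ha', rfl⟩ := hrefine a m a m' h
  rw [eq_of_eq_add_of_eq_add_of_atom hatom ha' ha]

/-- Every refinement monoid is atom-cancellative. -/
theorem refinement_atom_cancellative {M : Type*} [AddCommMonoid M]
    (hrefine : ∀ a b c d : M, a + b = c + d →
      ∃ e1 e2 e3 e4 : M, a = e1 + e2 ∧ b = e3 + e4 ∧ c = e1 + e3 ∧ d = e2 + e4)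
    (a : M) (ha0 : a ≠ 0) (hatom : ∀ b c : M, a = b + c → b = 0 ∨ c = 0)
    (m m' : M) (h : a + m = a + m') : m = m' :=
  refinement_atom_cancellative_general hrefine a hatom m m' h
end

section
/- A finite, conical, refinement commutative monoid has no atoms. -/
/-!
An atom `a` of a refinement monoid is cancellable: refining `a + x = a + y` writes
`a = e1 + e2 = e1 + e3`, `x = e3 + e4`, `y = e2 + e4`, and as `a` is an atom either `e1 = 0`
(so `e2 = e3 = a`) or `e2 = e3 = 0`; in both cases `x = y`. In a finite monoid a cancellable
element has a bijective translation, hence is a unit, and in a conical monoid the only unit is `0`.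
-/

theorem isAddLeftRegular_of_refinement_of_indecomposable {M : Type*} [AddCommMonoid M]
    (hrefine : ∀ a b c d : M, a + b = c + d →
      ∃ e1 e2 e3 e4 : M, a = e1 + e2 ∧ b = e3 + e4 ∧ c = e1 + e3 ∧ d = e2 + e4)
    {a : M} (hatom : ∀ b c : M, a = b + c → b = 0 ∨ c = 0) :
    IsAddLeftRegular a := by
  intro x y hxy
  obtain ⟨e1, e2, e3, e4, ha₁, rfl, ha₂, rfl⟩ := hrefine a x a y hxy
  rcases hatom e1 e2 ha₁ with rfl | rfl
  · rw [zero_add] at ha₁ ha₂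
    rw [← ha₁, ← ha₂]
  · rcases hatom e1 e3 ha₂ with rfl | rfl
    · rw [zero_add] at ha₁ ha₂
      rw [← ha₁, ← ha₂]
    · rfl

theorem IsAddLeftRegular.isAddUnit_of_finite {M : Type*} [AddMonoid M] [Finite M] {a : M}
    (h : IsAddLeftRegular a) : IsAddUnit a := by
  rwa [IsAddUnit.isAddUnit_iff_addLeft_bijective, ← Finite.injective_iff_bijective]

/-- A finite, conical, refinement commutative monoid has no atoms. -/
theorem finite_conical_refinement_no_atoms {M : Type*} [AddCommMonoid M] [Finite M]
    (hconical : ∀ a b : M, a + b = 0 → a = 0 ∧ b = 0)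
    (hrefine : ∀ a b c d : M, a + b = c + d →
      ∃ e1 e2 e3 e4 : M, a = e1 + e2 ∧ b = e3 + e4 ∧ c = e1 + e3 ∧ d = e2 + e4) :
    ¬ ∃ a : M, a ≠ 0 ∧ ∀ b c : M, a = b + c → b = 0 ∨ c = 0 := by
  rintro ⟨a, ha0, hatom⟩
  obtain ⟨b, hab⟩ :=
    (isAddLeftRegular_of_refinement_of_indecomposable hrefine hatom).isAddUnit_of_finite.exists_neg
  exact ha0 (hconical a b hab).1
end

section
/- For a finite commutative monoid M, the smallest ideal I of M (which equals the intersection of all sets a + M for a ∈ M, equivalently the set H(M) = {a ∈ M : a ≥ b for all b ∈ M} under the algebraic preorder) is a group, and it is isomorphic to the group completion (Grothendieck group) of M. -/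
/-!
The sum of all elements of `M` lies above every element, so the set `H(M)` of such elements
is a nonempty ideal; being finite and closed under addition it contains an idempotent `e`. Every
`x ∈ H(M)` has the form `e + c`, so `e` is the identity of `H(M)`, and writing `e = x + c` gives
the inverse `e + c` of `x`. A homomorphism `ψ` into a group kills the idempotent `e`, so
`m ↦ e + m` followed by `ψ` recovers `ψ`, and a map on `H(M)` is determined by its values on the
elements `e + m`.
-/

def smallestIdeal (M : Type*) [AddCommMonoid M] : Set M :=
  {x | ∀ b : M, ∃ c : M, x = b + c}

theorem Finite.exists_idempotent_mem_of_add_mem {M : Type*} [AddSemigroup M] [Finite M]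
    {s : Set M} (hs : s.Nonempty) (hadd : ∀ x ∈ s, ∀ y ∈ s, x + y ∈ s) :
    ∃ e ∈ s, e + e = e := by
  let _ : TopologicalSpace M := ⊥
  have : DiscreteTopology M := ⟨rfl⟩
  exact exists_idempotent_in_compact_add_subsemigroup (fun _ => continuous_of_discreteTopology)
    s hs s.toFinite.isCompact hadd

theorem AddMonoidHom.map_eq_zero_of_add_self_eq {M G : Type*} [AddZeroClass M] [AddGroup G]
    (ψ : M →+ G) {e : M} (he : e + e = e) : ψ e = 0 :=
  add_eq_left.mp (by rw [← map_add, he])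

namespace smallestIdeal

variable {M : Type*} [AddCommMonoid M]

theorem add_mem {x : M} (hx : x ∈ smallestIdeal M) (y : M) : x + y ∈ smallestIdeal M := by
  intro b
  obtain ⟨c, rfl⟩ := hx b
  exact ⟨c + y, add_assoc b c y⟩

theorem sum_univ_mem [Fintype M] : ∑ b : M, b ∈ smallestIdeal M := by
  classical
  exact fun b =>
    ⟨∑ x ∈ Finset.univ.erase b, x, (Finset.add_sum_erase _ _ (Finset.mem_univ b)).symm⟩

theorem exists_idempotent_mem [Finite M] : ∃ e ∈ smallestIdeal M, e + e = e := by
  have := Fintype.ofFinite M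
  exact Finite.exists_idempotent_mem_of_add_mem ⟨_, sum_univ_mem⟩ fun x hx y _ => add_mem hx y

variable {e : M} (he : e + e = e)
include he

theorem idempotent_add {x : M} (hx : x ∈ smallestIdeal M) : e + x = x := by
  obtain ⟨c, rfl⟩ := hx e
  rw [← add_assoc, he]

theorem exists_add_eq_idempotent (he_mem : e ∈ smallestIdeal M) (x : M) :
    ∃ y ∈ smallestIdeal M, x + y = e := by
  obtain ⟨c, hc⟩ := he_mem x
  refine ⟨e + c, add_mem he_mem c, ?_⟩
  rw [add_left_comm, ← hc, he]

end smallestIdeal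

/-- For a finite commutative monoid `M`, the smallest ideal
`H(M) = {x | x ≥ b for all b}` (under the algebraic preorder) is a group, and the map
`m ↦ z + m` (with `z` the identity of this group) is the group completion of `M`;
i.e. `H(M)` is isomorphic to the Grothendieck group of `M`, expressed via the
universal property of the group completion. -/
theorem smallest_ideal_is_group_completion {M : Type*} [AddCommMonoid M] [Finite M] :
    ∃ z ∈ {x : M | ∀ b : M, ∃ c : M, x = b + c},
      (∀ x ∈ {x : M | ∀ b : M, ∃ c : M, x = b + c},
        ∀ y ∈ {x : M | ∀ b : M, ∃ c : M, x = b + c},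
          x + y ∈ {x : M | ∀ b : M, ∃ c : M, x = b + c}) ∧
      (∀ x ∈ {x : M | ∀ b : M, ∃ c : M, x = b + c}, z + x = x) ∧
      (∀ x ∈ {x : M | ∀ b : M, ∃ c : M, x = b + c},
        ∃ y ∈ {x : M | ∀ b : M, ∃ c : M, x = b + c}, x + y = z) ∧
      ∀ (G : Type) (_ : AddCommGroup G) (ψ : M →+ G),
        ∃ χ : M → G,
          ((∀ x ∈ {x : M | ∀ b : M, ∃ c : M, x = b + c},
              ∀ y ∈ {x : M | ∀ b : M, ∃ c : M, x = b + c}, χ (x + y) = χ x + χ y) ∧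
            ∀ m : M, χ (z + m) = ψ m) ∧
          ∀ χ' : M → G,
            ((∀ x ∈ {x : M | ∀ b : M, ∃ c : M, x = b + c},
                ∀ y ∈ {x : M | ∀ b : M, ∃ c : M, x = b + c}, χ' (x + y) = χ' x + χ' y) ∧
              ∀ m : M, χ' (z + m) = ψ m) →
            ∀ x ∈ {x : M | ∀ b : M, ∃ c : M, x = b + c}, χ' x = χ x := by
  obtain ⟨e, he_mem, he⟩ := smallestIdeal.exists_idempotent_mem (M := M)
  refine ⟨e, he_mem, fun x hx y _ => smallestIdeal.add_mem hx y,
    fun x hx => smallestIdeal.idempotent_add he hx,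
    fun x _ => smallestIdeal.exists_add_eq_idempotent he he_mem x, fun G _ ψ => ?_⟩
  refine ⟨ψ, ⟨fun x _ y _ => map_add ψ x y, fun m => ?_⟩, ?_⟩
  · rw [map_add, ψ.map_eq_zero_of_add_self_eq he, zero_add]
  · rintro χ' ⟨-, hχ'⟩ x hx
    rw [← hχ', smallestIdeal.idempotent_add he hx]
end

section
/- For positive integers n ≥ 2 and k ≥ 1, the monoid M_{n,n+k} is not a refinement monoid. Specifically, the equation x + (n−1)x = x + (n+k−1)x holds but admits no refinement. -/
/-!
Below `n` the monoid `M_{n,n+k}` is just `ℕ`: the class of `m < n` is `{m}`. Hence a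
refinement `x = e₁ + e₂ = e₁ + e₃` of `x` forces `e₂ = e₃`, and then
`(n-1)x = e₃ + e₄ = e₂ + e₄ = (n+k-1)x`, which fails because `n - 1 < n` and `k ≥ 1`.
-/

/-- The congruence on `ℕ` defining `M_{n,n+k}`: `a ~ b` iff `a = b`, or both
`a, b ≥ n` and `a ≡ b (mod k)`. -/
def mnkSetoid (n k : ℕ) : Setoid ℕ where
  r a b := a = b ∨ (n ≤ a ∧ n ≤ b ∧ a % k = b % k)
  iseqv := by
    refine ⟨fun a => Or.inl rfl, ?_, ?_⟩
    · intro a b h; rcases h with h | h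
      · exact Or.inl h.symm
      · exact Or.inr ⟨h.2.1, h.1, h.2.2.symm⟩
    · intro a b c h1 h2
      rcases h1 with h1 | h1 <;> rcases h2 with h2 | h2
      · exact Or.inl (h1.trans h2)
      · subst h1; exact Or.inr h2
      · subst h2; exact Or.inr h1
      · exact Or.inr ⟨h1.1, h2.2.1, h1.2.2.trans h2.2.2⟩

/-- The monoid `M_{n,n+k}` generated by `x` with relation `(n+k)x = nx`,
realised as `ℕ` modulo the above congruence; the element `i • x` corresponds to
the class of `i`. -/
def Mnk (n k : ℕ) : Type := Quotient (mnkSetoid n k)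

/-- The class of `i : ℕ` in `M_{n,n+k}`, i.e. the element `i • x`. -/
def Mnk.mk (n k : ℕ) (i : ℕ) : Mnk n k := Quotient.mk (mnkSetoid n k) i

/-- Addition on `M_{n,n+k}`, induced from addition on `ℕ`. -/
def Mnk.add (n k : ℕ) : Mnk n k → Mnk n k → Mnk n k :=
  Quotient.map₂ (· + ·) (by
    intro a a' ha b b' hb
    try dsimp only
    rcases ha with ha | ha <;> rcases hb with hb | hb
    · exact Or.inl (by omega)
    · subst ha; exact Or.inr ⟨by omega, by omega, Nat.ModEq.add_left a hb.2.2⟩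
    · subst hb; exact Or.inr ⟨by omega, by omega, Nat.ModEq.add_right b ha.2.2⟩
    · exact Or.inr ⟨by omega, by omega, Nat.ModEq.add ha.2.2 hb.2.2⟩)

namespace Mnk

variable {n k : ℕ}

theorem mk_surjective : Function.Surjective (mk n k) :=
  Quotient.mk_surjective

theorem add_mk (a b : ℕ) : add n k (mk n k a) (mk n k b) = mk n k (a + b) :=
  rfl

theorem mk_eq_mk_iff {a b : ℕ} :
    mk n k a = mk n k b ↔ a = b ∨ (n ≤ a ∧ n ≤ b ∧ a % k = b % k) :=
  Quotient.eq

theorem mk_eq_mk_iff_of_lt {a b : ℕ} (ha : a < n) : mk n k a = mk n k b ↔ a = b := by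
  rw [mk_eq_mk_iff]
  omega

theorem mk_add_period {m : ℕ} (hm : n ≤ m) : mk n k (m + k) = mk n k m :=
  mk_eq_mk_iff.2 <| Or.inr ⟨by omega, hm, Nat.add_mod_right m k⟩

theorem eq_of_add_eq_add_of_lt {m : ℕ} (hm : m < n) {a b c : Mnk n k}
    (hb : mk n k m = add n k a b) (hc : mk n k m = add n k a c) : b = c := by
  obtain ⟨a, rfl⟩ := mk_surjective a
  obtain ⟨b, rfl⟩ := mk_surjective b
  obtain ⟨c, rfl⟩ := mk_surjective c
  rw [add_mk, mk_eq_mk_iff_of_lt hm] at hb hc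
  rw [show b = c by omega]

end Mnk

/-- For `n ≥ 2`, `k ≥ 1`, the monoid `M_{n,n+k}` is not a refinement monoid:
the equation `x + (n−1)x = x + (n+k−1)x` holds but admits no refinement. -/
theorem Mnk.not_refinement (n k : ℕ) (hn : 2 ≤ n) (hk : 1 ≤ k) :
    Mnk.add n k (Mnk.mk n k 1) (Mnk.mk n k (n - 1)) =
      Mnk.add n k (Mnk.mk n k 1) (Mnk.mk n k (n + k - 1)) ∧
    ¬ ∃ e1 e2 e3 e4 : Mnk n k,
        Mnk.mk n k 1 = Mnk.add n k e1 e2 ∧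
        Mnk.mk n k (n - 1) = Mnk.add n k e3 e4 ∧
        Mnk.mk n k 1 = Mnk.add n k e1 e3 ∧
        Mnk.mk n k (n + k - 1) = Mnk.add n k e2 e4 := by
  constructor
  · rw [Mnk.add_mk, Mnk.add_mk, show 1 + (n + k - 1) = n + k by omega,
      Mnk.mk_add_period (by omega), show 1 + (n - 1) = n by omega]
  · rintro ⟨e1, e2, e3, e4, h1, h2, h3, h4⟩
    obtain rfl : e2 = e3 := Mnk.eq_of_add_eq_add_of_lt (by omega) h1 h3
    have h : Mnk.mk n k (n - 1) = Mnk.mk n k (n + k - 1) := h2.trans h4.symm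
    rw [Mnk.mk_eq_mk_iff_of_lt (by omega)] at h
    omega
end

section
/- For positive integers n ≥ 1 and k ≥ 1, the identity element of the group {nx, …, (n+k−1)x} inside M_{n,n+k} is tx, where t is the unique multiple of k in the integer interval [n, n+k−1], and (t+1)x generates this cyclic group of order k. -/
/-! For `i ≥ n` the element `ix` depends only on `i mod k`, so `{nx, …, (n+k−1)x}` is a copy of
`ℤ/kℤ`: the multiple `t` of `k` plays the role of `0`, and `t + 1 ≡ 1` hits every residue
through its multiples `m(t+1)`, `1 ≤ m ≤ k`, all of which are `≥ n`. -/

theorem Nat.le_mul_div_add_pred {n k : ℕ} (hk : 0 < k) : n ≤ k * ((n + k - 1) / k) := by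
  have := Nat.lt_mul_div_succ (n + k - 1) hk
  rw [Nat.mul_succ] at this
  omega

theorem Nat.eq_of_dvd_of_dvd_of_lt_add {a b k : ℕ} (ha : k ∣ a) (hb : k ∣ b)
    (hab : a < b + k) (hba : b < a + k) : a = b :=
  ((Nat.modEq_zero_iff_dvd.2 ha).trans (Nat.modEq_zero_iff_dvd.2 hb).symm).eq_of_abs_lt
    (by rw [abs_lt]; omega)

theorem Nat.exists_pos_le_modEq {k : ℕ} (hk : 0 < k) (i : ℕ) :
    ∃ m, 1 ≤ m ∧ m ≤ k ∧ m ≡ i [MOD k] := by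
  refine ⟨(i + k - 1) % k + 1, by omega, Nat.mod_lt _ hk, ?_⟩
  calc (i + k - 1) % k + 1 ≡ i + k - 1 + 1 [MOD k] := (Nat.mod_modEq _ _).add_right 1
    _ = i + k := by omega
    _ ≡ i [MOD k] := Nat.add_modEq_right

namespace Mnk

variable {n k : ℕ}

theorem mk_eq_mk_of_modEq {a b : ℕ} (ha : n ≤ a) (hb : n ≤ b) (h : a ≡ b [MOD k]) :
    mk n k a = mk n k b :=
  Quotient.sound (Or.inr ⟨ha, hb, h⟩)

theorem add_mk_of_dvd {t i : ℕ} (ht : k ∣ t) (hi : n ≤ i) :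
    add n k (mk n k t) (mk n k i) = mk n k i :=
  show mk n k (t + i) = _ from
    mk_eq_mk_of_modEq (by omega) hi (by simpa using (Nat.modEq_zero_iff_dvd.2 ht).add_right i)

theorem mk_mul_succ_of_dvd {t m i : ℕ} (ht : k ∣ t) (hnt : n ≤ t) (hm : 0 < m) (hi : n ≤ i)
    (hmi : m ≡ i [MOD k]) : mk n k (m * (t + 1)) = mk n k i := by
  have hmt : m * (t + 1) ≡ m [MOD k] := by
    simpa [mul_add] using (Nat.modEq_zero_iff_dvd.2 (dvd_mul_of_dvd_right ht m)).add_right m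
  exact mk_eq_mk_of_modEq (le_trans hnt (by nlinarith)) hi (hmt.trans hmi)

end Mnk

theorem Mnk.identity_and_generator_general (n k : ℕ) (hk : 1 ≤ k) :
    ∃ t : ℕ, n ≤ t ∧ t ≤ n + k - 1 ∧ k ∣ t ∧
      (∀ t' : ℕ, n ≤ t' → t' ≤ n + k - 1 → k ∣ t' → t' = t) ∧
      (∀ x ∈ {x : Mnk n k | ∃ i : ℕ, n ≤ i ∧ i ≤ n + k - 1 ∧ x = Mnk.mk n k i},
        Mnk.add n k (Mnk.mk n k t) x = x) ∧
      (∀ x ∈ {x : Mnk n k | ∃ i : ℕ, n ≤ i ∧ i ≤ n + k - 1 ∧ x = Mnk.mk n k i},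
        ∃ m : ℕ, 1 ≤ m ∧ m ≤ k ∧ x = Mnk.mk n k (m * (t + 1))) := by
  set t := k * ((n + k - 1) / k)
  have hkt : k ∣ t := dvd_mul_right _ _
  have hnt : n ≤ t := Nat.le_mul_div_add_pred hk
  have htn : t ≤ n + k - 1 := Nat.mul_div_le _ _
  refine ⟨t, hnt, htn, hkt, ?_, ?_, ?_⟩
  · intro t' hnt' ht'n hkt'
    exact Nat.eq_of_dvd_of_dvd_of_lt_add hkt' hkt (by omega) (by omega)
  · rintro _ ⟨i, hi, -, rfl⟩
    exact Mnk.add_mk_of_dvd hkt hi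
  · rintro _ ⟨i, hi, -, rfl⟩
    obtain ⟨m, hm1, hmk, hmi⟩ := Nat.exists_pos_le_modEq hk i
    exact ⟨m, hm1, hmk, (Mnk.mk_mul_succ_of_dvd hkt hnt hm1 hi hmi).symm⟩

/-- The identity element of the group `{nx, …, (n+k−1)x}` inside `M_{n,n+k}` is
`tx`, where `t` is the unique multiple of `k` in `[n, n+k−1]`, and `(t+1)x`
generates this cyclic group of order `k`. -/
theorem Mnk.identity_and_generator (n k : ℕ) (hn : 1 ≤ n) (hk : 1 ≤ k) :
    ∃ t : ℕ, n ≤ t ∧ t ≤ n + k - 1 ∧ k ∣ t ∧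
      (∀ t' : ℕ, n ≤ t' → t' ≤ n + k - 1 → k ∣ t' → t' = t) ∧
      (∀ x ∈ {x : Mnk n k | ∃ i : ℕ, n ≤ i ∧ i ≤ n + k - 1 ∧ x = Mnk.mk n k i},
        Mnk.add n k (Mnk.mk n k t) x = x) ∧
      (∀ x ∈ {x : Mnk n k | ∃ i : ℕ, n ≤ i ∧ i ≤ n + k - 1 ∧ x = Mnk.mk n k i},
        ∃ m : ℕ, 1 ≤ m ∧ m ≤ k ∧ x = Mnk.mk n k (m * (t + 1))) :=
  Mnk.identity_and_generator_general n k hk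
end

section
/- Confluence Lemma: Let (E, w) be a row-finite weighted graph, F_E the free commutative monoid on E⁰, and for each vertex v with weight w(v) define a one-step reduction →₁ replacing w(v)·v by the sum of r(e) over e ∈ s⁻¹(v) (when at least w(v) copies of v are present); let → be its reflexive transitive closure and ∼ the congruence it generates. Then for a, b ∈ F_E, a ∼ b if and only if there exists c ∈ F_E with a → c and b → c. -/
/-! Weighted graphs `(E,w)`: a directed graph with vertex set `V`, edge set `E`,
source and range maps `s r : E → V`, and weight `w : E¹ → ℕ⁺`.  The free
commutative monoid on the vertices is `V →₀ ℕ`. -/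

/-- The vertex weight `w(v) = max{w(e) : e ∈ s⁻¹(v)}` for regular vertices,
and `w(v) = 1` for sinks, for a row-finite weighted graph. -/
noncomputable def wVert {V E : Type} (s : E → V) (h : ∀ v : V, {e : E | s e = v}.Finite)
    (w : E → ℕ) (v : V) : ℕ :=
  max 1 (((h v).toFinset).sup w)

/-- The `r`-transform: `r(w(v)v) = Σ_{e ∈ s⁻¹(v)} r(e)`, as an element of the
free commutative monoid `V →₀ ℕ` on the vertices. -/
noncomputable def rTrans {V E : Type} [DecidableEq V] (s r : E → V)
    (h : ∀ v : V, {e : E | s e = v}.Finite) (v : V) : V →₀ ℕ :=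
  ∑ e ∈ (h v).toFinset, Finsupp.single (r e) 1

/-- The one-step reduction `→₁` on the free commutative monoid `V →₀ ℕ`:
replace `w(v)·v` (when present) by `Σ_{e ∈ s⁻¹(v)} r(e)`. -/
noncomputable def wStep {V E : Type} [DecidableEq V] (s r : E → V)
    (h : ∀ v : V, {e : E | s e = v}.Finite) (w : E → ℕ) (a b : V →₀ ℕ) : Prop :=
  ∃ (v : V) (c : V →₀ ℕ),
    a = c + Finsupp.single v (wVert s h w v) ∧ b = c + rTrans s r h v

/-! Two distinct one-step reductions of the same element rewrite disjoint summands, so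
applying the other one afterwards closes the diamond in one step each. For an abstract
reduction this local confluence (with at most one step on one side) already implies the
Church–Rosser property, hence that the equivalence generated by `→₁` is joinability
under `→`. -/

namespace Relation

variable {α : Type*} {r : α → α → Prop}

theorem eqvGen_iff_join_reflTransGen
    (h : ∀ a b c, r a b → r a c → ∃ d, ReflGen r b d ∧ ReflTransGen r c d) {a b : α} :
    EqvGen r a b ↔ Join (ReflTransGen r) a b := by
  constructor
  · intro hab
    refine (equivalence_join_reflTransGen h).eqvGen_iff.mp (hab.mono ?_)
    exact fun x y hxy => ⟨y, .single hxy, .refl⟩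
  · exact join_le_of_equivalence_of_le (EqvGen.is_equivalence r)
      (EqvGen.reflTransGen_le_eqvGen r) a b

end Relation

namespace Finsupp

theorem exists_eq_add_single_of_add_single_eq {ι : Type*} {i j : ι}
    (hij : i ≠ j) {m n : ℕ} {f g : ι →₀ ℕ} (hfg : f + single i m = g + single j n) :
    ∃ d : ι →₀ ℕ, f = d + single j n ∧ g = d + single i m := by
  have hle : single j n ≤ f := by
    have hfg_j := DFunLike.congr_fun hfg j
    simp only [coe_add, Pi.add_apply, single_eq_same, single_eq_of_ne' hij, add_zero] at hfg_j
    exact single_le_iff.mpr (hfg_j ▸ le_add_self)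
  refine ⟨f - single j n, (tsub_add_cancel_of_le hle).symm,
    add_right_cancel (b := single j n) ?_⟩
  rw [← hfg, add_right_comm, tsub_add_cancel_of_le hle]

end Finsupp

theorem wStep_diamond {V E : Type} [DecidableEq V] (s r : E → V)
    (h : ∀ v : V, {e : E | s e = v}.Finite) (w : E → ℕ) (a b c : V →₀ ℕ)
    (hab : wStep s r h w a b) (hac : wStep s r h w a c) :
    ∃ d, Relation.ReflGen (wStep s r h w) b d ∧ Relation.ReflTransGen (wStep s r h w) c d := by
  obtain ⟨v, f, rfl, rfl⟩ := hab
  obtain ⟨v', g, hfg, rfl⟩ := hac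
  by_cases hvv' : v = v'
  · subst hvv'
    obtain rfl : f = g := add_right_cancel hfg
    exact ⟨_, .refl, .refl⟩
  · obtain ⟨d, rfl, rfl⟩ := Finsupp.exists_eq_add_single_of_add_single_eq hvv' hfg
    refine ⟨d + rTrans s r h v + rTrans s r h v', .single ⟨v', d + rTrans s r h v, ?_, rfl⟩,
      .single ⟨v, d + rTrans s r h v', ?_, ?_⟩⟩ <;> abel

theorem confluence_lemma_general {V E : Type} [DecidableEq V] (s r : E → V)
    (h : ∀ v : V, {e : E | s e = v}.Finite) (w : E → ℕ)
    (a b : V →₀ ℕ) :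
    Relation.EqvGen (wStep s r h w) a b ↔
      ∃ c : V →₀ ℕ, Relation.ReflTransGen (wStep s r h w) a c ∧
        Relation.ReflTransGen (wStep s r h w) b c :=
  Relation.eqvGen_iff_join_reflTransGen (wStep_diamond s r h w)

/-- **The Confluence Lemma.**  For a row-finite weighted graph `(E,w)`, two
elements of the free commutative monoid on the vertices are congruent modulo
the defining relations of the graph monoid `M(E,w)` (i.e. under the congruence
`∼` generated by the one-step reduction `→₁`) if and only if they have a common
reduct under the reflexive–transitive closure `→` of `→₁`. -/
theorem confluence_lemma {V E : Type} [DecidableEq V] (s r : E → V)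
    (h : ∀ v : V, {e : E | s e = v}.Finite) (w : E → ℕ) (hw : ∀ e : E, 0 < w e)
    (a b : V →₀ ℕ) :
    Relation.EqvGen (wStep s r h w) a b ↔
      ∃ c : V →₀ ℕ, Relation.ReflTransGen (wStep s r h w) a c ∧
        Relation.ReflTransGen (wStep s r h w) b c :=
  confluence_lemma_general s r h w a b
end

section
/- Let (E, w) be a finite weighted graph and S the set of vertices of E that do not connect to any cycle. Then the unit group Z(M(E,w)) of the graph monoid M(E,w) equals the submonoid M(S, w). -/
/-! A vertex lies in `S` exactly when all its successors do, and edges out of `S` are well-founded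
because the graph is finite and no cycle is reachable from `S`. Along this induction each relation
`w(v)·v = Σ r(e)` writes a multiple of `v ∈ S` as a sum of units, so every element of `M(S,w)` is a
unit. Conversely, "the support lies in `S`" is a congruence on `V →₀ ℕ` (supports of sums of
`ℕ`-valued functions are unions) that contains the defining relations, so `a + b ∼ 0` forces the
support of `a` into `S`. -/

/-- The out-neighbourhood sum `Σ_{e ∈ s⁻¹(v)} r(e)` in the free commutative
monoid `V →₀ ℕ`, for a graph with finitely many edges. -/
noncomputable def frTrans {V E : Type} [Fintype E] [DecidableEq V] (s r : E → V) (v : V) : V →₀ ℕ :=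
  ∑ e ∈ Finset.univ.filter (fun e => s e = v), Finsupp.single (r e) 1

/-- The vertex weight: `w(v) = max{w(e) : e ∈ s⁻¹(v)}` for non-sinks and
`w(v) = 1` for sinks. -/
def fwVert {V E : Type} [Fintype E] [DecidableEq V] (s : E → V) (w : E → ℕ) (v : V) : ℕ :=
  max 1 ((Finset.univ.filter (fun e => s e = v)).sup w)

/-- The defining relations of the graph monoid `M(E,w)`:
`w(v)·v = Σ_{e ∈ s⁻¹(v)} r(e)` for every vertex `v` (so sinks become `0`). -/
def gRel {V E : Type} [Fintype E] [DecidableEq V] (s r : E → V) (w : E → ℕ)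
    (a b : V →₀ ℕ) : Prop :=
  ∃ v : V, a = Finsupp.single v (fwVert s w v) ∧ b = frTrans s r v

/-- The graph monoid `M(E,w)` of a finite weighted graph: the free commutative
monoid on the vertices modulo the congruence generated by the relations. -/
abbrev graphMonoid {V E : Type} [Fintype E] [DecidableEq V] (s r : E → V) (w : E → ℕ) :=
  (addConGen (gRel s r w)).Quotient

/-- The class of `a : V →₀ ℕ` in the graph monoid `M(E,w)`. -/
noncomputable def gMk {V E : Type} [Fintype E] [DecidableEq V] (s r : E → V) (w : E → ℕ)
    (a : V →₀ ℕ) : graphMonoid s r w :=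
  (addConGen (gRel s r w)).mk' a

/-- One vertex steps to another if there is an edge from the first to the second. -/
def eRel {V E : Type} (s r : E → V) (x y : V) : Prop := ∃ e : E, s e = x ∧ r e = y

/-- The set `S` of vertices which do not connect to any cycle. -/
def noCycleSet {V E : Type} (s r : E → V) : Set V :=
  {v : V | ¬ ∃ u : V, Relation.ReflTransGen (eRel s r) v u ∧ Relation.TransGen (eRel s r) u u}


section NoCycleSet

variable {V E : Type} (s r : E → V)

theorem mem_noCycleSet_iff {v : V} :
    v ∈ noCycleSet s r ↔ ∀ e, s e = v → r e ∈ noCycleSet s r := by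
  constructor
  · rintro hv e rfl ⟨u, hu, hcycle⟩
    exact hv ⟨u, .head ⟨e, rfl, rfl⟩ hu, hcycle⟩
  · rintro h ⟨u, hvu, hcycle⟩
    obtain ⟨_, ⟨e, rfl, rfl⟩, hu⟩ :=
      Relation.TransGen.head'_iff.1 (Relation.TransGen.trans_right hvu hcycle)
    exact h e rfl ⟨u, hu, hcycle⟩

theorem wellFounded_eRel_inv_of_mem_noCycleSet [Finite V] :
    WellFounded fun u v => v ∈ noCycleSet s r ∧ eRel s r v u := by
  set R : V → V → Prop := fun u v => v ∈ noCycleSet s r ∧ eRel s r v u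
  have : Std.Irrefl (Relation.TransGen R) := by
    refine ⟨fun v hvv => ?_⟩
    obtain ⟨_, -, hv, -⟩ := Relation.TransGen.tail'_iff.1 hvv
    have hcycle : Relation.TransGen (eRel s r) v v :=
      Relation.transGen_swap.1 (Relation.TransGen.mono (fun _ _ h => h.2) _ _ hvv)
    exact hv ⟨v, .refl, hcycle⟩
  exact Subrelation.wf (fun h => .single h)
    (Finite.wellFounded_of_trans_of_irrefl (Relation.TransGen R))

end NoCycleSet

def supportSubsetCon {V : Type} (S : Set V) : AddCon (V →₀ ℕ) where
  r a b := ↑a.support ⊆ S ↔ ↑b.support ⊆ S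
  iseqv := ⟨fun _ => Iff.rfl, Iff.symm, Iff.trans⟩
  add' hab hcd := by
    classical
    simp only [Finsupp.support_add_eq_union, Finset.coe_union, Set.union_subset_iff, hab, hcd]

section GraphMonoid

variable {V E : Type} [Fintype E] [DecidableEq V] (s r : E → V) (w : E → ℕ)

theorem gMk_eq_mk' : (gMk s r w : (V →₀ ℕ) → graphMonoid s r w) = (addConGen (gRel s r w)).mk' :=
  rfl

theorem gMk_surjective : Function.Surjective (gMk s r w) :=
  AddCon.mk'_surjective

theorem gMk_single_fwVert (v : V) :
    gMk s r w (Finsupp.single v (fwVert s w v)) = gMk s r w (frTrans s r v) :=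
  (AddCon.eq _).2 (AddConGen.Rel.of _ _ ⟨v, rfl, rfl⟩)

theorem one_le_fwVert (v : V) : 1 ≤ fwVert s w v :=
  le_max_left _ _

theorem support_frTrans (v : V) :
    (frTrans s r v).support = (Finset.univ.filter fun e => s e = v).image r := by
  ext u
  simp [frTrans, Finsupp.finsetSum_apply, Finsupp.single_apply]

theorem gRel_le_supportSubsetCon : gRel s r w ≤ supportSubsetCon (noCycleSet s r) := by
  rintro _ _ ⟨v, rfl, rfl⟩
  have hw : fwVert s w v ≠ 0 := Nat.one_le_iff_ne_zero.1 (one_le_fwVert s w v)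
  simp only [supportSubsetCon, AddCon.rel_mk, Finsupp.support_single _ hw, support_frTrans,
    Finset.coe_singleton, Set.singleton_subset_iff, Finset.coe_image, Finset.coe_filter,
    Finset.mem_univ, true_and, Set.image_subset_iff]
  exact mem_noCycleSet_iff s r

theorem support_subset_noCycleSet_iff_of_gMk_eq {a b : V →₀ ℕ} (h : gMk s r w a = gMk s r w b) :
    ↑a.support ⊆ noCycleSet s r ↔ ↑b.support ⊆ noCycleSet s r :=
  AddCon.addConGen_le.2 (gRel_le_supportSubsetCon s r w) ((AddCon.eq _).1 h)

theorem isAddUnit_gMk_single_one [Finite V] {v : V} (hv : v ∈ noCycleSet s r) :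
    IsAddUnit (gMk s r w (Finsupp.single v 1)) := by
  induction v using (wellFounded_eRel_inv_of_mem_noCycleSet s r).induction with
  | _ v ih =>
  have hrel : IsAddUnit (gMk s r w (Finsupp.single v (fwVert s w v))) := by
    rw [gMk_single_fwVert, frTrans, gMk_eq_mk', map_sum, IsAddUnit.sum_iff]
    intro e he
    have hse : s e = v := (Finset.mem_filter.1 he).2
    exact ih (r e) ⟨hv, e, hse, rfl⟩ ((mem_noCycleSet_iff s r).1 hv e hse)
  rw [← Nat.sub_add_cancel (one_le_fwVert s w v), Finsupp.single_add, gMk_eq_mk', map_add] at hrel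
  exact isAddUnit_of_add_isAddUnit_right hrel

theorem isAddUnit_gMk_iff [Finite V] {a : V →₀ ℕ} :
    IsAddUnit (gMk s r w a) ↔ ↑a.support ⊆ noCycleSet s r := by
  constructor
  · intro h
    obtain ⟨y, hy⟩ := isAddUnit_iff_exists_neg.1 h
    obtain ⟨b, rfl⟩ := gMk_surjective s r w y
    have hab : gMk s r w (a + b) = gMk s r w 0 := by
      rw [gMk_eq_mk', map_add, map_zero]
      exact hy
    have hsupp := (support_subset_noCycleSet_iff_of_gMk_eq s r w hab).2 (by simp)
    rw [Finsupp.support_add_eq_union, Finset.coe_union, Set.union_subset_iff] at hsupp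
    exact hsupp.1
  · intro ha
    rw [← a.sum_single, gMk_eq_mk', map_finsuppSum, Finsupp.sum, IsAddUnit.sum_iff]
    intro v hv
    rw [← Finsupp.smul_single_one, map_nsmul]
    exact (isAddUnit_gMk_single_one s r w (ha hv)).nsmul _

end GraphMonoid

theorem unitGroup_eq_MS_general {V E : Type} [Fintype V] [Fintype E] [DecidableEq V]
    (s r : E → V) (w : E → ℕ) :
    {x : graphMonoid s r w | ∃ y : graphMonoid s r w, x + y = 0} =
      {x : graphMonoid s r w | ∃ a : V →₀ ℕ,
        (∀ v ∈ a.support, v ∈ noCycleSet s r) ∧ x = gMk s r w a} := by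
  ext x
  obtain ⟨a, rfl⟩ := gMk_surjective s r w x
  simp only [Set.mem_ofPred_eq, ← isAddUnit_iff_exists_neg]
  refine ⟨fun ha => ⟨a, (isAddUnit_gMk_iff s r w).1 ha, rfl⟩, ?_⟩
  rintro ⟨b, hb, hab⟩
  rw [hab]
  exact (isAddUnit_gMk_iff s r w).2 hb

/-- For a finite weighted graph `(E,w)` with `S` the set of vertices not
connecting to any cycle, the unit group `Z(M(E,w)) = {x | ∃ y, x + y = 0}` of
the graph monoid equals the submonoid `M(S,w)`, i.e. the set of classes of
elements of the free commutative monoid supported in `S`. -/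
theorem unitGroup_eq_MS {V E : Type} [Fintype V] [Fintype E] [DecidableEq V]
    (s r : E → V) (w : E → ℕ) (hw : ∀ e : E, 0 < w e) :
    {x : graphMonoid s r w | ∃ y : graphMonoid s r w, x + y = 0} =
      {x : graphMonoid s r w | ∃ a : V →₀ ℕ,
        (∀ v ∈ a.support, v ∈ noCycleSet s r) ∧ x = gMk s r w a} :=
  unitGroup_eq_MS_general s r w
end

section
/- Reduction uniqueness for sandpile monoids: let E be a sandpile graph with sink s, equipped with the balanced weighting w(v) = |s⁻¹(v)| for non-sink vertices. Under the reduction system on the free commutative monoid F_E replacing w(v)·v by Σ_{e ∈ s⁻¹(v)} r(e), every element of F_E is reduction-finite and reduction-unique (i.e., every maximal sequence of reductions terminates and all terminal reductions of a given element coincide). -/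
/-- The out-degree `|s⁻¹(v)|` of a vertex. -/
def outdeg {V E : Type} [Fintype E] [DecidableEq V] (s : E → V) (v : V) : ℕ :=
  (Finset.univ.filter (fun e => s e = v)).card

/-- The sandpile (balanced-weight) one-step reduction on the free commutative
monoid `V →₀ ℕ`: for a non-sink vertex `v`, replace `|s⁻¹(v)|·v` by
`Σ_{e ∈ s⁻¹(v)} r(e)`. -/
noncomputable def spStep {V E : Type} [Fintype E] [DecidableEq V] (s r : E → V)
    (a b : V →₀ ℕ) : Prop :=
  ∃ (v : V) (c : V →₀ ℕ), (∃ e : E, s e = v) ∧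
    a = c + Finsupp.single v (outdeg s v) ∧ b = c + frTrans s r v

/-!
Each reduction moves `|s⁻¹(v)|` grains from `v` to its out-neighbours, so the total number of
grains is invariant and every coordinate stays bounded along a reduction sequence. In an infinite
sequence some vertex `x` fires infinitely often; an out-neighbour `y` of `x` that fired only
finitely often would from then on gain a grain at every firing of `x` and lose none, so `y` fires
infinitely often as well. Following a path from `x` to the sink, the sink would have to fire,
which it cannot. Uniqueness of terminal reducts follows from Church–Rosser: two firings at
distinct vertices commute, since firing one vertex never removes grains from another.
-/

theorem Relation.ReflTransGen.eq_of_not_exists {α : Type*} {r : α → α → Prop} {a b : α}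
    (h : Relation.ReflTransGen r a b) (ha : ¬ ∃ c, r a c) : a = b :=
  h.cases_head.resolve_right fun ⟨c, hac, _⟩ => ha ⟨c, hac⟩

theorem not_bddAbove_range_of_le_succ_of_frequently_lt {g : ℕ → ℕ} {M : ℕ}
    (hmono : ∀ m ≥ M, g m ≤ g (m + 1)) (hinc : ∀ m, ∃ k ≥ m, g k < g (k + 1)) :
    ¬ BddAbove (Set.range g) := by
  rintro ⟨N, hN⟩
  suffices h : ∀ n, ∃ m ≥ M, n ≤ g m by
    obtain ⟨m, -, hm⟩ := h (N + 1)
    have := hN ⟨m, rfl⟩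
    omega
  intro n
  induction n with
  | zero => exact ⟨M, le_rfl, Nat.zero_le _⟩
  | succ n ih =>
    obtain ⟨m, hMm, hm⟩ := ih
    obtain ⟨k, hmk, hk⟩ := hinc m
    have := Nat.rel_of_forall_rel_succ_of_le_of_le (· ≤ ·) hmono hMm hmk
    exact ⟨k + 1, by omega, by omega⟩

theorem Finsupp.exists_add_single_of_add_single_eq {V : Type*} {c₁ c₂ : V →₀ ℕ} {v w : V}
    {m n : ℕ} (hvw : v ≠ w) (h : c₁ + single v m = c₂ + single w n) :
    ∃ c, c₁ = c + single w n ∧ c₂ = c + single v m := by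
  have hw : single w n ≤ c₁ := by
    rw [single_le_iff]
    have := DFunLike.congr_fun h w
    simp only [coe_add, Pi.add_apply, single_eq_same, single_eq_of_ne hvw.symm] at this
    omega
  refine ⟨c₁ - single w n, (tsub_add_cancel_of_le hw).symm, add_right_cancel (b := single w n) ?_⟩
  rw [add_right_comm, tsub_add_cancel_of_le hw, h]

section Sandpile

variable {V E : Type} [Fintype E] [DecidableEq V] (s r : E → V)

theorem degree_frTrans (v : V) : (frTrans s r v).degree = outdeg s v := by
  simp [frTrans, outdeg, map_sum, Finsupp.degree_single]

theorem one_le_frTrans_apply (e : E) : 1 ≤ frTrans s r (s e) (r e) := by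
  rw [frTrans, Finsupp.finsetSum_apply]
  exact (Finsupp.single_eq_same (a := r e) (b := 1)).symm.le.trans <|
    Finset.single_le_sum (f := fun e' => Finsupp.single (r e') 1 (r e))
      (fun _ _ => Nat.zero_le _) (by simp)

/-- `spStep s r a b` holds iff `spFire s r v a b` does for some `v`. -/
def spFire (v : V) (a b : V →₀ ℕ) : Prop :=
  ∃ c : V →₀ ℕ, (∃ e : E, s e = v) ∧
    a = c + Finsupp.single v (outdeg s v) ∧ b = c + frTrans s r v

variable {s r}

theorem spFire.add_single_eq {v : V} {a b : V →₀ ℕ} (h : spFire s r v a b) :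
    b + Finsupp.single v (outdeg s v) = a + frTrans s r v := by
  obtain ⟨c, -, rfl, rfl⟩ := h
  exact add_right_comm _ _ _

theorem spFire.degree_eq {v : V} {a b : V →₀ ℕ} (h : spFire s r v a b) :
    b.degree = a.degree := by
  have := congrArg Finsupp.degree h.add_single_eq
  simp only [map_add, Finsupp.degree_single, degree_frTrans] at this
  omega

theorem spFire.apply_le {v u : V} {a b : V →₀ ℕ} (h : spFire s r v a b) (hu : u ≠ v) :
    a u ≤ b u := by
  have := DFunLike.congr_fun h.add_single_eq u
  simp only [Finsupp.coe_add, Pi.add_apply, Finsupp.single_eq_of_ne hu] at this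
  omega

theorem spFire.apply_lt {v u : V} {a b : V →₀ ℕ} (h : spFire s r v a b) (hu : u ≠ v)
    (hvu : eRel s r v u) : a u < b u := by
  obtain ⟨e, rfl, rfl⟩ := hvu
  have hfire := DFunLike.congr_fun h.add_single_eq (r e)
  have := one_le_frTrans_apply s r e
  simp only [Finsupp.coe_add, Pi.add_apply, Finsupp.single_eq_of_ne hu] at hfire
  omega

section FiringSequence

variable {f : ℕ → V →₀ ℕ} {v : ℕ → V} (hf : ∀ m, spFire s r (v m) (f m) (f (m + 1)))
include hf

theorem degree_eq_of_spFire_seq (m : ℕ) : (f m).degree = (f 0).degree := by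
  induction m with
  | zero => rfl
  | succ m ih => exact (hf m).degree_eq.trans ih

theorem infinite_setOf_spFire_of_eRel {x y : V} (hx : {m | v m = x}.Infinite)
    (hxy : eRel s r x y) : {m | v m = y}.Infinite := by
  by_cases hxy' : x = y
  · exact hxy' ▸ hx
  intro hy
  obtain ⟨M, hM⟩ := hy.bddAbove
  have hne : ∀ m ≥ M + 1, y ≠ v m := fun m hm h => by
    have := hM h.symm
    omega
  refine not_bddAbove_range_of_le_succ_of_frequently_lt (g := fun m => f m y) (M := M + 1)
    (fun m hm => (hf m).apply_le (hne m hm)) (fun m => ?_) ⟨(f 0).degree, ?_⟩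
  · obtain ⟨k, hk, hmk⟩ := hx.exists_gt (max m (M + 1))
    exact ⟨k, by omega, (hf k).apply_lt (hne k (by omega)) (hk ▸ hxy)⟩
  · rintro _ ⟨m, rfl⟩
    exact (Finsupp.le_degree y (f m)).trans (degree_eq_of_spFire_seq hf m).le

end FiringSequence

theorem not_exists_spStep_seq [Finite V] (σ : V) (hsink : ¬ ∃ e : E, s e = σ)
    (hconn : ∀ v : V, Relation.ReflTransGen (eRel s r) v σ) :
    ¬ ∃ f : ℕ → (V →₀ ℕ), ∀ m : ℕ, spStep s r (f m) (f (m + 1)) := by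
  rintro ⟨f, hf⟩
  choose v hv using hf
  obtain ⟨x, hx⟩ := Finite.exists_infinite_fiber v
  have hreach : ∀ y, Relation.ReflTransGen (eRel s r) x y → {m | v m = y}.Infinite := by
    intro y hxy
    induction hxy with
    | refl => exact Set.infinite_coe_iff.mp hx
    | tail _ hyz ih => exact infinite_setOf_spFire_of_eRel hv ih hyz
  obtain ⟨m, hm⟩ := (hreach σ (hconn x)).nonempty
  obtain ⟨-, ⟨e, he⟩, -⟩ := hv m
  exact hsink ⟨e, he.trans hm⟩

theorem spStep_diamond (a b c : V →₀ ℕ) (hab : spStep s r a b) (hac : spStep s r a c) :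
    ∃ d, Relation.ReflGen (spStep s r) b d ∧ Relation.ReflTransGen (spStep s r) c d := by
  obtain ⟨v, c₁, hv, rfl, rfl⟩ := hab
  obtain ⟨w, c₂, hw, ha, rfl⟩ := hac
  by_cases hvw : v = w
  · subst hvw
    obtain rfl := add_right_cancel ha
    exact ⟨_, .refl, .refl⟩
  obtain ⟨c, rfl, rfl⟩ := Finsupp.exists_add_single_of_add_single_eq hvw ha
  exact ⟨c + frTrans s r v + frTrans s r w,
    .single ⟨w, c + frTrans s r v, hw, add_right_comm _ _ _, rfl⟩,
    .single ⟨v, c + frTrans s r w, hv, add_right_comm _ _ _, add_right_comm _ _ _⟩⟩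

end Sandpile

theorem sandpile_reduction_unique_general {V E : Type} [Fintype V] [Fintype E] [DecidableEq V]
    (s r : E → V) (σ : V)
    (hsink : ¬ ∃ e : E, s e = σ)
    (hconn : ∀ v : V, Relation.ReflTransGen (eRel s r) v σ) :
    (¬ ∃ f : ℕ → (V →₀ ℕ), ∀ m : ℕ, spStep s r (f m) (f (m + 1))) ∧
    (∀ a c c' : V →₀ ℕ,
      Relation.ReflTransGen (spStep s r) a c →
      Relation.ReflTransGen (spStep s r) a c' →
      (¬ ∃ d : V →₀ ℕ, spStep s r c d) →
      (¬ ∃ d : V →₀ ℕ, spStep s r c' d) → c = c') := by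
  refine ⟨not_exists_spStep_seq σ hsink hconn, fun a c c' hc hc' hc_nf hc'_nf => ?_⟩
  obtain ⟨d, hcd, hc'd⟩ := Relation.church_rosser spStep_diamond hc hc'
  exact (hcd.eq_of_not_exists hc_nf).trans (hc'd.eq_of_not_exists hc'_nf).symm

/-- **Reduction uniqueness for sandpile monoids.**  Let `E` be a sandpile graph
(finite, unique sink `σ`, every vertex connects to `σ`) with the balanced
weighting `w(v) = |s⁻¹(v)|`.  Then every element of the free commutative monoid
on the vertices is reduction-finite (there is no infinite sequence of
reductions) and reduction-unique (all of its terminal reducts coincide). -/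
theorem sandpile_reduction_unique {V E : Type} [Fintype V] [Fintype E] [DecidableEq V]
    (s r : E → V) (σ : V)
    (hsink : ¬ ∃ e : E, s e = σ)
    (huniq : ∀ v : V, (¬ ∃ e : E, s e = v) → v = σ)
    (hconn : ∀ v : V, Relation.ReflTransGen (eRel s r) v σ) :
    (¬ ∃ f : ℕ → (V →₀ ℕ), ∀ m : ℕ, spStep s r (f m) (f (m + 1))) ∧
    (∀ a c c' : V →₀ ℕ,
      Relation.ReflTransGen (spStep s r) a c →
      Relation.ReflTransGen (spStep s r) a c' →
      (¬ ∃ d : V →₀ ℕ, spStep s r c d) →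
      (¬ ∃ d : V →₀ ℕ, spStep s r c' d) → c = c') :=
  sandpile_reduction_unique_general s r σ hsink hconn
end
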